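/- arXiv:1807.03359 — 3 statements merged into one kernel-verified Lean document; each statement's English description precedes it below -/
import Mathlib

section
/- Let Q be a finite quiver and (i,j) a covering pair. Let B be the set of vertices k such that there is a directed path (possibly of length zero) from j to k, and let A be the complement of B in V(Q). Then i ∈ A, and there is no arrow from a vertex of B to a vertex of A; consequently Q is a triangular extension of the induced subquivers Q|_A and Q|_B. -/
private lemma rtg_to_fun {V : Type*} {r : V → V → Prop} {j i : V}
    (h : Relation.ReflTransGen r j i) :
    ∃ (n : ℕ) (g : ℕ → V), g 0 = j ∧ g n = i ∧ ∀ t < n, r (g t) (g (t + 1)) := by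
  induction h with
  | refl => exact ⟨0, fun _ => j, rfl, rfl, fun t ht => absurd ht (Nat.not_lt_zero t)⟩
  | tail _ hbc ih =>
    obtain ⟨n, g, hg0, hgn, hstep⟩ := ih
    rename_i b c _
    refine ⟨n + 1, fun t => if t ≤ n then g t else c, ?_, ?_, ?_⟩
    · simp [hg0]
    · simp
    · intro t ht
      rcases Nat.lt_succ_iff_lt_or_eq.mp ht with h' | h'
      · simp only [Nat.le_of_lt h', if_pos, Nat.succ_le_of_lt h']
        exact hstep t h'
      · subst h'
        simp only [le_refl, if_pos, Nat.lt_irrefl, Nat.not_le.mpr (Nat.lt_succ_self t), if_neg]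
        rw [hgn]; exact hbc

/-- Let `(i, j)` be a covering pair of a finite quiver, let `B` be the set of
vertices reachable from `j` by a directed path (possibly of length zero), and let
`A` be its complement. Then `i ∈ A` and there is no arrow from a vertex of `B` to a
vertex of `A`; consequently the quiver is a triangular extension of the induced
subquivers on `A` and on `B` (all cross arrows go from `A` to `B`). -/
theorem covering_pair_triangular_extension {V : Type*} [Fintype V]
    (Arr : V → V → Prop)
    (hloop : ∀ v, ¬ Arr v v) (h2 : ∀ i j, Arr i j → ¬ Arr j i)
    (i j : V)
    (hcov : Arr i j ∧
      ¬ ∃ f : ℤ → V, (∀ a, Arr (f a) (f (a + 1))) ∧ ∃ a, f a = i ∧ f (a + 1) = j) :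
    i ∈ {k | Relation.ReflTransGen Arr j k}ᶜ ∧
    ∀ k ∈ {k | Relation.ReflTransGen Arr j k},
      ∀ l ∈ {k | Relation.ReflTransGen Arr j k}ᶜ, ¬ Arr k l := by
  obtain ⟨harr, hnbi⟩ := hcov
  constructor
  · intro hreach
    obtain ⟨n, g, hg0, hgn, hstep⟩ := rtg_to_fun hreach
    rcases Nat.eq_zero_or_pos n with hn0 | hn
    · subst hn0
      rw [hg0] at hgn
      exact hloop j (hgn ▸ harr)
    set L : ℤ := (n : ℤ) + 1 with hL
    have hLpos : 0 < L := by positivity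
    refine hnbi ⟨fun a => g ((a - 1) % L).toNat, ?_, 0, ?_, ?_⟩
    · intro a
      show Arr (g ((a - 1) % L).toNat) (g ((a + 1 - 1) % L).toNat)
      have hmem : 0 ≤ (a - 1) % L ∧ (a - 1) % L < L :=
        ⟨Int.emod_nonneg _ (by omega), Int.emod_lt_of_pos _ hLpos⟩
      set t : ℕ := ((a - 1) % L).toNat with ht
      have htval : (a - 1) % L = (t : ℤ) := by omega
      have htn : t ≤ n := by omega
      have ha1 : (a + 1 - 1) % L = ((t : ℤ) + 1) % L := by
        have h := Int.emod_add_mul_ediv (a - 1) L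
        have heq : a + 1 - 1 = (t : ℤ) + 1 + L * ((a - 1) / L) := by omega
        rw [heq, Int.add_mul_emod_self_left]
      rcases lt_or_eq_of_le htn with hlt | heqn
      · have hv : (a + 1 - 1) % L = (t : ℤ) + 1 := by
          rw [ha1]
          exact Int.emod_eq_of_lt (by positivity) (by omega)
        have hv' : ((a + 1 - 1) % L).toNat = t + 1 := by omega
        rw [hv']
        exact hstep t hlt
      · have hv : (a + 1 - 1) % L = 0 := by
          rw [ha1, show (t : ℤ) + 1 = L by omega]
          exact Int.emod_self
        have hv' : ((a + 1 - 1) % L).toNat = 0 := by omega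
        rw [hv', hg0, show g t = i by rw [heqn, hgn]]
        exact harr
    · show g (((0 : ℤ) - 1) % L).toNat = i
      have hv : ((0 : ℤ) - 1) % L = (n : ℤ) := by
        have heq : (0 : ℤ) - 1 = (n : ℤ) + L * (-1) := by omega
        rw [heq, Int.add_mul_emod_self_left]
        exact Int.emod_eq_of_lt (by positivity) (by omega)
      rw [hv]
      simpa using hgn
    · show g (((0 : ℤ) + 1 - 1) % L).toNat = j
      norm_num
      exact hg0
  · intro k hk l hl hkl
    exact hl (hk.tail hkl)
end

section
/- Every acyclic quiver admits a reddening sequence. (Abstract version: if a class R of quivers contains all quivers with no arrows, is closed under mutation, and is closed under triangular extensions, then R contains all acyclic quivers.) -/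
/-- A quiver (finite directed multigraph without loops or 2-cycles), encoded as a
skew-symmetric integer matrix `B` on a finite vertex set: `B i j` is the number of
arrows `i → j` minus the number of arrows `j → i`. -/
structure Quiv where
  V : Type
  [fin : Fintype V]
  B : V → V → ℤ
  skew : ∀ i j, B i j = -(B j i)

attribute [instance] Quiv.fin

namespace Quiv

lemma sign_mul_max (a b : ℤ) :
    a.sign * max (a * b) 0 = b.sign * max (b * a) 0 := by
  rcases lt_trichotomy (a * b) 0 with h | h | h
  · rw [max_eq_right h.le, mul_comm b a, max_eq_right h.le, mul_zero, mul_zero]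
  · simp [h, mul_comm b a]
  · have h' : 0 < b * a := by rwa [mul_comm]
    rw [max_eq_left h.le, max_eq_left h'.le, mul_comm b a]
    rcases mul_pos_iff.mp h with ⟨ha, hb⟩ | ⟨ha, hb⟩
    · rw [Int.sign_eq_one_of_pos ha, Int.sign_eq_one_of_pos hb]
    · rw [Int.sign_eq_neg_one_of_neg ha, Int.sign_eq_neg_one_of_neg hb]

open Classical in
/-- Quiver mutation at the vertex `i`. -/
noncomputable def mutate (Q : Quiv) (i : Q.V) : Quiv where
  V := Q.V
  fin := Q.fin
  B := fun j k =>
    if j = i ∨ k = i then -(Q.B j k)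
    else Q.B j k + (Q.B j i).sign * max (Q.B j i * Q.B i k) 0
  skew := by
    intro j k
    try dsimp only
    by_cases h : j = i ∨ k = i
    · rw [if_pos h, if_pos (Or.symm h), Q.skew j k]
    · have h' : ¬(k = i ∨ j = i) := fun hc => h (Or.symm hc)
      rw [if_neg h, if_neg h', Q.skew k j, Q.skew k i, Q.skew i j]
      have hm : (-(Q.B i k)) * (-(Q.B j i)) = Q.B i k * Q.B j i := by ring
      rw [hm, Int.sign_neg, sign_mul_max (Q.B j i) (Q.B i k)]
      ring

/-- `Arrow Q i j` means there is an arrow from `i` to `j`. -/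
def Arrow (Q : Quiv) (i j : Q.V) : Prop := 0 < Q.B i j

/-- A quiver is acyclic if it has no directed cycles. -/
def Acyclic (Q : Quiv) : Prop := ∀ v, ¬ Relation.TransGen Q.Arrow v v

def IsSource (Q : Quiv) (i : Q.V) : Prop := ∀ j, ¬ Q.Arrow j i

def IsSink (Q : Quiv) (j : Q.V) : Prop := ∀ k, ¬ Q.Arrow j k

/-- The induced subquiver on a subset `S` of the vertices. -/
noncomputable def restrict (Q : Quiv) (S : Set Q.V) : Quiv where
  V := S
  fin := Fintype.ofFinite S
  B := fun a b => Q.B a b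
  skew := fun a b => Q.skew a b

/-- Deletion of the vertex `i` (induced subquiver on the complement). -/
noncomputable def delete (Q : Quiv) (i : Q.V) : Quiv := Q.restrict {v | v ≠ i}

/-- Iterated mutation along a list of vertices. -/
noncomputable def mutateSeq : (Q : Quiv) → List Q.V → Quiv
  | Q, [] => Q
  | Q, i :: l => mutateSeq (Q.mutate i) l
termination_by _ l => l.length
decreasing_by all_goals (simp; exact le_rfl)

/-- Isomorphism (relabeling of vertices) of quivers. -/
def Iso (Q Q' : Quiv) : Prop :=
  ∃ e : Q.V ≃ Q'.V, ∀ a b, Q'.B (e a) (e b) = Q.B a b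

/-- Mutation equivalence: `Q'` is obtained from `Q` by finitely many mutations,
up to relabeling of vertices. -/
def MutEquiv (Q Q' : Quiv) : Prop := ∃ l : List Q.V, Iso (Q.mutateSeq l) Q'

/-- `Q` is a triangular extension of `Q₁` and `Q₂`: `V(Q) = V(Q₁) ⊔ V(Q₂)`,
`Q₁` and `Q₂` are induced subquivers, and all remaining arrows go from
`V(Q₁)` to `V(Q₂)`. -/
def IsTriExt (Q Q₁ Q₂ : Quiv) : Prop :=
  ∃ e : Q.V ≃ (Q₁.V ⊕ Q₂.V),
    (∀ a b : Q₁.V, Q.B (e.symm (Sum.inl a)) (e.symm (Sum.inl b)) = Q₁.B a b) ∧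
    (∀ a b : Q₂.V, Q.B (e.symm (Sum.inr a)) (e.symm (Sum.inr b)) = Q₂.B a b) ∧
    (∀ (a : Q₁.V) (b : Q₂.V), 0 ≤ Q.B (e.symm (Sum.inl a)) (e.symm (Sum.inr b)))

/-- A covering pair: an arrow `i → j` which is not part of any bi-infinite path. -/
def CoveringPair (Q : Quiv) (i j : Q.V) : Prop :=
  Q.Arrow i j ∧
    ¬ ∃ f : ℤ → Q.V, (∀ a : ℤ, Q.Arrow (f a) (f (a + 1))) ∧ ∃ a, f a = i ∧ f (a + 1) = j

end Quiv


/-! A nonempty acyclic quiver has a source `v`. All arrows at `v` leave it, so `Q` is the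
triangular extension of the one-vertex quiver `{v}` by `Q` with `v` deleted, which is again
acyclic; induct on the number of vertices. -/

namespace Quiv

lemma B_eq_zero_of_subsingleton (Q : Quiv) [Subsingleton Q.V] (a b : Q.V) : Q.B a b = 0 := by
  have := Q.skew a a
  rw [Subsingleton.elim b a]
  omega

lemma Acyclic.exists_isSource {Q : Quiv} (hQ : Q.Acyclic) [Nonempty Q.V] :
    ∃ v, Q.IsSource v := by
  have : Std.Irrefl (Relation.TransGen Q.Arrow) := ⟨hQ⟩
  obtain ⟨v, -, hv⟩ := (Finite.wellFounded_of_trans_of_irrefl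
    (Relation.TransGen Q.Arrow)).has_min Set.univ Set.univ_nonempty
  exact ⟨v, fun j hj => hv j trivial (.single hj)⟩

lemma Acyclic.restrict {Q : Quiv} (hQ : Q.Acyclic) (S : Set Q.V) : (Q.restrict S).Acyclic :=
  fun w hw => hQ w.1 (.lift (fun x : (Q.restrict S).V => x.1) (fun _ _ h => h) _ _ hw)

lemma card_delete_lt (Q : Quiv) (v : Q.V) :
    Fintype.card (Q.delete v).V < Fintype.card Q.V := by
  classical
  calc Fintype.card (Q.delete v).V = Fintype.card {x : Q.V // x ≠ v} :=
        Fintype.card_congr (Equiv.refl _)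
    _ < Fintype.card Q.V := Fintype.card_subtype_lt (x := v) (by simp)

lemma IsSource.isTriExt {Q : Quiv} {v : Q.V} (hv : Q.IsSource v) :
    Q.IsTriExt (Q.restrict {v}) (Q.delete v) := by
  classical
  refine ⟨(Equiv.sumCompl (· = v)).symm, fun _ _ => rfl, fun _ _ => rfl, ?_⟩
  rintro ⟨a, rfl : a = v⟩ ⟨b, -⟩
  show 0 ≤ Q.B a b
  rw [Q.skew]
  exact neg_nonneg.mpr (not_lt.mp (hv b))

end Quiv

theorem acyclic_in_reddening_class_general
    (R : Quiv → Prop)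
    (hNoArrows : ∀ Q : Quiv, (∀ a b, Q.B a b = 0) → R Q)
    (hTri : ∀ Q Q₁ Q₂ : Quiv, Q.IsTriExt Q₁ Q₂ → R Q₁ → R Q₂ → R Q) :
    ∀ Q : Quiv, Q.Acyclic → R Q := by
  intro Q hQ
  induction h : Fintype.card Q.V using Nat.strong_induction_on generalizing Q with
  | _ n ih =>
    cases isEmpty_or_nonempty Q.V
    · exact hNoArrows Q Q.B_eq_zero_of_subsingleton
    obtain ⟨v, hv⟩ := hQ.exists_isSource
    have : Subsingleton (Q.restrict {v}).V := inferInstanceAs (Subsingleton ({v} : Set Q.V))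
    refine hTri Q _ _ hv.isTriExt ?_ ?_
    · exact hNoArrows _ (Quiv.B_eq_zero_of_subsingleton _)
    · exact ih _ (h ▸ Q.card_delete_lt v) _ (hQ.restrict _) rfl

/-- Every acyclic quiver admits a reddening sequence (abstract version): if a class
`R` of quivers contains all quivers with no arrows, is closed under mutation, and is
closed under triangular extensions, then `R` contains all acyclic quivers. -/
theorem acyclic_in_reddening_class
    (R : Quiv → Prop)
    (hNoArrows : ∀ Q : Quiv, (∀ a b, Q.B a b = 0) → R Q)
    (hMut : ∀ (Q : Quiv) (i : Q.V), R Q → R (Q.mutate i))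
    (hTri : ∀ Q Q₁ Q₂ : Quiv, Q.IsTriExt Q₁ Q₂ → R Q₁ → R Q₂ → R Q) :
    ∀ Q : Quiv, Q.Acyclic → R Q :=
  acyclic_in_reddening_class_general R hNoArrows hTri
end

section
/- Mutation of coefficients in a semifield is an involution: applying the coefficient mutation rule at index i twice returns the original coefficient tuple, given that quiver mutation at i negates the entries Q_{ik} for all k. -/
/-- Mutation at `i` of a coefficient tuple `y` in a semifield `(P, ·, ⊕)`, with
respect to exchange data `M` (where `M j k` is the number of arrows `j → k` minus
the number of arrows `k → j`): `y'_i = y_i⁻¹`, and for `k ≠ i`,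
`y'_k = y_k · (y_i ⊕ 1)^{M i k}` if `M i k ≥ 0`, while
`y'_k = y_k · (y_i / (y_i ⊕ 1))^{M k i}` if `M k i ≥ 0`. -/
def coeffMut {P : Type*} [CommGroup P] {ι : Type*} [DecidableEq ι]
    (op : P → P → P) (M : ι → ι → ℤ) (i : ι) (y : ι → P) : ι → P :=
  fun k =>
    if k = i then (y i)⁻¹
    else if 0 ≤ M i k then y k * (op (y i) 1) ^ (M i k)
    else y k * (y i * (op (y i) 1)⁻¹) ^ (M k i)

/-- Mutation of coefficients in a semifield is an involution: if the semifield is a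
commutative (multiplicative) group `P` with an auxiliary addition `op = ⊕` which is
commutative and over which multiplication distributes, and quiver mutation at `i`
turns the skew-symmetric exchange data `M` into `M'` with `M' i k = -(M i k)`,
then applying the coefficient mutation rule at `i` twice returns the original
coefficient tuple. -/
theorem coeffMut_involution {P : Type*} [CommGroup P] {ι : Type*} [DecidableEq ι]
    (op : P → P → P)
    (hcomm : ∀ a b, op a b = op b a)
    (hdist : ∀ a b c, a * op b c = op (a * b) (a * c))
    (M M' : ι → ι → ℤ)
    (hskew : ∀ j k, M j k = -(M k j))
    (hskew' : ∀ j k, M' j k = -(M' k j))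
    (i : ι)
    (hM' : ∀ k, M' i k = -(M i k))
    (y : ι → P) :
    coeffMut op M' i (coeffMut op M i y) = y := by
  have aux : ∀ (a b c : P) (n : ℤ), a * (b * c⁻¹) ^ n * (b⁻¹ * c) ^ n = a := by
    intro a b c n
    rw [mul_assoc, ← mul_zpow]
    have h1 : b * c⁻¹ * (b⁻¹ * c) = 1 := by
      simp [mul_comm, mul_left_comm, mul_assoc]
    rw [h1, one_zpow, mul_one]
  have hop : op (y i)⁻¹ 1 = (y i)⁻¹ * op (y i) 1 := by
    rw [hdist, mul_one, inv_mul_cancel]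
    exact hcomm _ _
  funext k
  by_cases hk : k = i
  · simp [coeffMut, hk]
  · have hMki : M k i = -(M i k) := by rw [hskew]
    have hM'ik : M' i k = -(M i k) := hM' k
    have hM'ki : M' k i = M i k := by rw [hskew', hM']; ring
    simp only [coeffMut, if_neg hk, if_pos rfl, if_true, hMki, hM'ik, hM'ki]
    rcases lt_trichotomy (M i k) 0 with h | h | h
    · rw [if_neg (show ¬(0 ≤ M i k) by omega),
        if_pos (show (0:ℤ) ≤ -M i k by omega), hop]
      exact aux _ _ _ _
    · rw [if_pos (show (0:ℤ) ≤ M i k by omega),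
        if_pos (show (0:ℤ) ≤ -M i k by omega), h]
      simp
    · rw [if_pos (show (0:ℤ) ≤ M i k by omega),
        if_neg (show ¬((0:ℤ) ≤ -M i k) by omega), hop]
      have h2 : (y i)⁻¹ * ((y i)⁻¹ * op (y i) 1)⁻¹ = (op (y i) 1)⁻¹ := by
        simp [mul_inv_rev, mul_comm, mul_left_comm, mul_assoc]
      rw [h2, inv_zpow, mul_assoc, mul_inv_cancel, mul_one]
end
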